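/- arXiv:1809.04242 — 2 statements merged into one kernel-verified Lean document; each statement's English description precedes it below -/
import Mathlib

section
/- Let n ≥ 1, let 1 ≤ m < n, and let w, u be permutations of {1,2,…,n} such that w →^{r_m} u, witnessed by pairs (a_1,b_1),…,(a_s,b_s) with s = ℓ(u) − ℓ(w), a_i ≤ m < b_i, b_1,…,b_s pairwise distinct, u = wτ_{a_1b_1}⋯τ_{a_sb_s}, and ℓ(wτ_{a_1b_1}⋯τ_{a_ib_i}) = ℓ(w) + i for all i. Then {b : m < b ≤ n and w(b) > u(b)} = {b_1,…,b_s}; in particular this set has exactly s = ℓ(u) − ℓ(w) elements. -/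
/-!
A step `v ↦ v τ_{ab}` with `a < b` raises the length exactly when `v a < v b`: then
`(i, j) ↦ (τ i, τ j)` when `τ` keeps `i < j` in order, and `(i, j)` otherwise, is an
involution of the pairs `i < j` that maps the inversions of `v`, together with `(a, b)`,
into those of `v τ_{ab}`. Hence each step of a chain lowers the value at its `bᵢ`.
A position `b ≥ m` is never an `aᵢ`, so only the steps with `bᵢ = b` move it: with distinct
`bᵢ` there is exactly one such step if `b` is among the `bᵢ`, and none otherwise.
-/

/-- The length (number of inversions) of a permutation of `Fin n`
(representing `{1,…,n}` with `i : Fin n` standing for `i+1`). -/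
def invLength {n : ℕ} (w : Equiv.Perm (Fin n)) : ℕ :=
  (Finset.univ.filter fun p : Fin n × Fin n => p.1 < p.2 ∧ w p.2 < w p.1).card

/-- `w τ_{a₁b₁} ⋯ τ_{aₛbₛ}` for the list of pairs `L = [(a₁,b₁),…,(aₛ,bₛ)]`. -/
def chainProd {n : ℕ} (w : Equiv.Perm (Fin n)) (L : List (Fin n × Fin n)) :
    Equiv.Perm (Fin n) :=
  w * (L.map fun p => Equiv.swap p.1 p.2).prod

/-- The list `L = [(a₁,b₁),…,(aₛ,bₛ)]` is a chain witnessing `w ≤ₘ u`: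
each `aᵢ ≤ m < bᵢ` (in 1-indexed terms, i.e. `(aᵢ : ℕ) < m ≤ (bᵢ : ℕ)` in 0-indexed `Fin n`),
`u = w τ_{a₁b₁} ⋯ τ_{aₛbₛ}`, and `ℓ(w τ_{a₁b₁} ⋯ τ_{aᵢbᵢ}) = ℓ(w) + i` for all `i ≤ s`. -/
def IsMChain {n : ℕ} (m : ℕ) (w u : Equiv.Perm (Fin n)) (L : List (Fin n × Fin n)) : Prop :=
  (∀ p ∈ L, (p.1 : ℕ) < m ∧ m ≤ (p.2 : ℕ)) ∧
  u = chainProd w L ∧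
  ∀ i, i ≤ L.length → invLength (chainProd w (L.take i)) = invLength w + i

/-- The `m`-Bruhat order `w ≤ₘ u`. -/
def mBruhat {n : ℕ} (m : ℕ) (w u : Equiv.Perm (Fin n)) : Prop :=
  ∃ L, IsMChain m w u L

/-- `w →^{r_m} u` : as `w ≤ₘ u`, with the `bᵢ` pairwise distinct. -/
def rmRel {n : ℕ} (m : ℕ) (w u : Equiv.Perm (Fin n)) : Prop :=
  ∃ L, IsMChain m w u L ∧ (L.map Prod.snd).Nodup

open Equiv Finset

section InvLength

variable {n : ℕ}

def inversions (v : Perm (Fin n)) : Finset (Fin n × Fin n) :=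
  univ.filter fun p => p.1 < p.2 ∧ v p.2 < v p.1

lemma mem_inversions {v : Perm (Fin n)} {i j : Fin n} :
    (i, j) ∈ inversions v ↔ i < j ∧ v j < v i := by
  simp [inversions]

theorem invLength_lt_invLength_mul_swap {v : Perm (Fin n)} {a b : Fin n} (hab : a < b)
    (hv : v a < v b) : invLength v < invLength (v * swap a b) := by
  set τ := swap a b
  let φ : Fin n × Fin n → Fin n × Fin n := fun p =>
    if τ p.1 < τ p.2 then (τ p.1, τ p.2) else p
  have hφφ : ∀ p : Fin n × Fin n, p.1 < p.2 → φ (φ p) = p := by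
    rintro ⟨i, j⟩ hij
    by_cases h : τ i < τ j <;> simp [φ, τ, h, hij] at h ⊢
  have hlt : ∀ p ∈ insert (a, b) (inversions v), p.1 < p.2 := by
    rintro ⟨i, j⟩ hp
    rw [mem_insert, mem_inversions] at hp
    grind
  have hmaps : ∀ p ∈ insert (a, b) (inversions v), φ p ∈ inversions (v * τ) := by
    rintro ⟨i, j⟩ hp
    rw [mem_insert, mem_inversions] at hp
    simp only [φ, τ]
    split_ifs <;> simp only [mem_inversions, Perm.mul_apply, swap_apply_self] <;>
      simp only [swap_apply_def] at * <;> grind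
  have hinj : Set.InjOn φ (insert (a, b) (inversions v) : Finset _) := fun p hp q hq hpq => by
    rw [← hφφ p (hlt p hp), hpq, hφφ q (hlt q hq)]
  have hab' : (a, b) ∉ inversions v := by simp [mem_inversions, hv.le]
  calc invLength v < #(insert (a, b) (inversions v)) := by
        rw [card_insert_of_notMem hab']
        exact Nat.lt_succ_self _
    _ ≤ invLength (v * τ) := card_le_card_of_injOn φ hmaps hinj

theorem invLength_lt_invLength_mul_swap_iff {v : Perm (Fin n)} {a b : Fin n} (hab : a < b) :
    invLength v < invLength (v * swap a b) ↔ v a < v b := by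
  refine ⟨fun h => ?_, invLength_lt_invLength_mul_swap hab⟩
  by_contra! hle
  have hlt : (v * swap a b) a < (v * swap a b) b := by
    simpa using lt_of_le_of_ne hle (v.injective.ne hab.ne')
  have := invLength_lt_invLength_mul_swap hab hlt
  rw [mul_assoc, swap_mul_self, mul_one] at this
  exact lt_asymm h this

lemma chainProd_cons (w : Perm (Fin n)) (p : Fin n × Fin n) (L : List (Fin n × Fin n)) :
    chainProd w (p :: L) = chainProd (w * swap p.1 p.2) L := by
  simp [chainProd, mul_assoc]

lemma chainProd_apply_of_forall_ne {w : Perm (Fin n)} {L : List (Fin n × Fin n)} {b : Fin n}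
    (h : ∀ p ∈ L, p.1 ≠ b ∧ p.2 ≠ b) : chainProd w L b = w b := by
  induction L generalizing w with
  | nil => simp [chainProd]
  | cons p L ih =>
    obtain ⟨hp₁, hp₂⟩ := h p List.mem_cons_self
    rw [chainProd_cons, ih fun q hq => h q (List.mem_cons_of_mem _ hq), Perm.mul_apply,
      swap_apply_of_ne_of_ne hp₁.symm hp₂.symm]

end InvLength

namespace IsMChain

variable {n m : ℕ} {w u : Perm (Fin n)} {a c : Fin n} {L : List (Fin n × Fin n)}

lemma invLength_mul_swap (h : IsMChain m w u ((a, c) :: L)) :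
    invLength (w * swap a c) = invLength w + 1 := by
  simpa [chainProd] using h.2.2 1 (by simp)

lemma tail (h : IsMChain m w u ((a, c) :: L)) : IsMChain m (w * swap a c) u L := by
  refine ⟨fun p hp => h.1 p (List.mem_cons_of_mem _ hp), by rw [h.2.1, chainProd_cons], ?_⟩
  intro i hi
  have := h.2.2 (i + 1) (by simpa using hi)
  rw [List.take_succ_cons, chainProd_cons] at this
  rw [this, h.invLength_mul_swap]
  lia

lemma le_of_mem (h : IsMChain m w u L) {b : Fin n} (hb : b ∈ L.map Prod.snd) :
    m ≤ (b : ℕ) := by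
  obtain ⟨p, hp, rfl⟩ := List.mem_map.1 hb
  exact (h.1 p hp).2

lemma apply_eq_of_notMem (h : IsMChain m w u L) {b : Fin n} (hmb : m ≤ (b : ℕ))
    (hb : b ∉ L.map Prod.snd) : u b = w b := by
  rw [h.2.1]
  refine chainProd_apply_of_forall_ne fun p hp => ⟨?_, ?_⟩
  · exact Fin.ne_of_lt (Fin.lt_def.2 ((h.1 p hp).1.trans_le hmb))
  · rintro rfl
    exact hb (List.mem_map_of_mem hp)

lemma apply_lt_of_mem (h : IsMChain m w u L) (hL : (L.map Prod.snd).Nodup) {b : Fin n}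
    (hb : b ∈ L.map Prod.snd) : u b < w b := by
  induction L generalizing w with
  | nil => simp at hb
  | cons p L ih =>
    obtain ⟨a, c⟩ := p
    obtain ⟨ham, hmc⟩ := h.1 _ List.mem_cons_self
    rw [List.map_cons, List.nodup_cons] at hL
    have hac : a < c := Fin.lt_def.2 (ham.trans_le hmc)
    have hwac : w a < w c := by
      rw [← invLength_lt_invLength_mul_swap_iff hac, h.invLength_mul_swap]
      exact Nat.lt_succ_self _
    by_cases hbc : b = c
    · subst hbc
      rw [h.tail.apply_eq_of_notMem hmc hL.1]
      simpa using hwac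
    · have hb' : b ∈ L.map Prod.snd := by simpa [hbc] using hb
      have hab : a < b := Fin.lt_def.2 (ham.trans_le (h.tail.le_of_mem hb'))
      calc u b < (w * swap a c) b := ih h.tail hL.2 hb'
        _ = w b := by rw [Perm.mul_apply, swap_apply_of_ne_of_ne hab.ne' hbc]

end IsMChain

theorem stmt1_general (n m : ℕ)
    (w u : Equiv.Perm (Fin n)) (L : List (Fin n × Fin n))
    (hL : IsMChain m w u L) (hb : (L.map Prod.snd).Nodup) :
    (Finset.univ.filter fun b : Fin n => m ≤ (b : ℕ) ∧ u b < w b)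
      = (L.map Prod.snd).toFinset ∧
    (Finset.univ.filter fun b : Fin n => m ≤ (b : ℕ) ∧ u b < w b).card
      = invLength u - invLength w := by
  have hset : (Finset.univ.filter fun b : Fin n => m ≤ (b : ℕ) ∧ u b < w b)
      = (L.map Prod.snd).toFinset := by
    ext b
    simp only [mem_filter, mem_univ, true_and, List.mem_toFinset]
    constructor
    · rintro ⟨hmb, hlt⟩
      by_contra hbL
      exact hlt.ne (hL.apply_eq_of_notMem hmb hbL)
    · exact fun hbL => ⟨hL.le_of_mem hbL, hL.apply_lt_of_mem hb hbL⟩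
  have hlen : invLength u = invLength w + L.length := by
    simpa [← hL.2.1] using hL.2.2 L.length le_rfl
  refine ⟨hset, ?_⟩
  rw [hset, List.card_toFinset, List.dedup_eq_self.2 hb, List.length_map, hlen]
  lia

/-- a chain with distinct `bᵢ` witnessing `w →^{r_m} u` satisfies
`{b : m < b ≤ n, w(b) > u(b)} = {b₁,…,bₛ}`, a set of `s = ℓ(u) − ℓ(w)` elements. -/
theorem stmt1 (n m : ℕ) (hn : 1 ≤ n) (hm : 1 ≤ m) (hmn : m < n)
    (w u : Equiv.Perm (Fin n)) (L : List (Fin n × Fin n))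
    (hL : IsMChain m w u L) (hb : (L.map Prod.snd).Nodup) :
    (Finset.univ.filter fun b : Fin n => m ≤ (b : ℕ) ∧ u b < w b)
      = (L.map Prod.snd).toFinset ∧
    (Finset.univ.filter fun b : Fin n => m ≤ (b : ℕ) ∧ u b < w b).card
      = invLength u - invLength w :=
  stmt1_general n m w u L hL hb
end

section
/- Let n ≥ 1, let 1 ≤ m < n, and let w, u be permutations of {1,2,…,n} with w ≤_m u in the m-Bruhat order. Then #{b : m < b ≤ n and w(b) > u(b)} ≤ ℓ(u) − ℓ(w), and equality holds if and only if w →^{r_m} u. -/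
/-!
Along an `m`-chain every step `v ↦ v τ_{ab}` with `a ≤ m < b` raises the length by one, and this
forces `v a < v b`, since right multiplication by `τ_{ab}` lowers the length when `v b < v a`.
So each step moves the smaller value `v a` into position `b > m` and fixes every other position
`> m`: the values at positions `> m` only decrease, and the positions where `u b < w b` are
exactly the `bᵢ`, of which there are `s = ℓ(u) - ℓ(w)` counted with multiplicity.
-/

open Equiv Finset

/-- The pairs `i < j` whose order `swap a b` reverses are `(a, b)`, `(a, j)` and `(i, b)` with
`a < i, j < b`; for these the claim follows from `v a < v b` by transitivity. -/
lemma apply_swap_lt_apply_swap {n : ℕ} {v : Perm (Fin n)} {a b i j : Fin n} (hab : a < b)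
    (hv : v a < v b) (hij : i < j) (hτ : swap a b j < swap a b i) (hvij : v j < v i) :
    v (swap a b j) < v (swap a b i) := by
  rw [swap_apply_def, swap_apply_def] at *
  split_ifs at * <;> subst_vars <;> omega

lemma invLength_lt_mul_swap {n : ℕ} (v : Perm (Fin n)) {a b : Fin n} (hab : a < b)
    (hv : v a < v b) : invLength v < invLength (v * swap a b) := by
  classical
  set τ := swap a b
  let inv (σ : Perm (Fin n)) := univ.filter fun p : Fin n × Fin n => p.1 < p.2 ∧ σ p.2 < σ p.1
  -- An injection from the inversions of `v`, together with `(a, b)`, into those of `v * τ`.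
  let f : Fin n × Fin n → Fin n × Fin n := fun p => if τ p.1 < τ p.2 then (τ p.1, τ p.2) else p
  have hf_inj : Set.InjOn f {p | p.1 < p.2} := by
    rintro ⟨i, j⟩ (hij : i < j) ⟨k, l⟩ (hkl : k < l) h
    simp only [f] at h
    split_ifs at h with h₁ h₂ h₂ <;> simp only [Prod.mk.injEq] at h
    · simp [τ.injective h.1, τ.injective h.2]
    · obtain ⟨rfl, rfl⟩ := h
      simp [τ, swap_apply_self] at h₂
      omega
    · obtain ⟨rfl, rfl⟩ := h
      simp [τ, swap_apply_self] at h₁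
      omega
    · simp [h]
  have hf_maps : Set.MapsTo f (insert (a, b) (inv v) : Finset _) (inv (v * τ)) := by
    intro p hp
    simp only [coe_insert, Set.mem_insert_iff, mem_coe, mem_filter, mem_univ, true_and,
      inv] at hp ⊢
    rcases hp with rfl | ⟨hij, hvij⟩
    · have : ¬τ a < τ b := by simp [τ, hab.le]
      simp only [f, if_neg this]
      simpa [τ] using ⟨hab, hv⟩
    · by_cases h : τ p.1 < τ p.2
      · simpa [f, h, τ] using hvij
      · have hτ : τ p.2 < τ p.1 := lt_of_le_of_ne (not_lt.1 h) (τ.injective.ne hij.ne')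
        simpa [f, h] using ⟨hij, apply_swap_lt_apply_swap hab hv hij hτ hvij⟩
  calc invLength v < #(insert (a, b) (inv v)) := by
        rw [card_insert_of_notMem (by simp [inv, hv.le])]
        exact Nat.lt_succ_self _
    _ ≤ invLength (v * τ) := card_le_card_of_injOn f hf_maps (hf_inj.mono fun p hp => by
        rcases mem_insert.1 hp with rfl | hp
        · exact hab
        · exact (mem_filter.1 hp).2.1)

lemma apply_lt_apply_of_invLength_lt_mul_swap {n : ℕ} {v : Perm (Fin n)} {a b : Fin n}
    (hab : a < b) (h : invLength v < invLength (v * swap a b)) : v a < v b := by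
  by_contra! hba
  have hlt : (v * swap a b) a < (v * swap a b) b := by
    simpa using lt_of_le_of_ne hba (v.injective.ne hab.ne')
  have := invLength_lt_mul_swap (v * swap a b) hab hlt
  rw [mul_assoc, swap_mul_self, mul_one] at this
  omega

namespace IsMChain

variable {n m : ℕ} {v u : Perm (Fin n)} {p : Fin n × Fin n} {L : List (Fin n × Fin n)}

lemma invLength_sub_eq (h : IsMChain m v u L) :
    invLength u - invLength v = (L.map Prod.snd).length := by
  have := h.2.2 L.length le_rfl
  rw [List.take_length, ← h.2.1] at this
  simp [this]

lemma of_cons (h : IsMChain m v u (p :: L)) :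
    (p.1 : ℕ) < m ∧ m ≤ (p.2 : ℕ) ∧ v p.1 < v p.2 ∧ IsMChain m (v * swap p.1 p.2) u L := by
  obtain ⟨hpairs, hu, hlen⟩ := h
  have hchain : ∀ T, chainProd v (p :: T) = chainProd (v * swap p.1 p.2) T := fun T => by
    simp [chainProd, mul_assoc]
  have hstep : invLength (v * swap p.1 p.2) = invLength v + 1 := by
    simpa [chainProd] using hlen 1 (by simp)
  obtain ⟨hp₁, hp₂⟩ := hpairs p List.mem_cons_self
  refine ⟨hp₁, hp₂, apply_lt_apply_of_invLength_lt_mul_swap (by omega) (by omega),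
    fun q hq => hpairs q (List.mem_cons_of_mem _ hq), by rw [hu, hchain], fun i hi => ?_⟩
  have := hlen (i + 1) (by simpa using hi)
  rw [List.take_succ_cons, hchain] at this
  omega

lemma apply_le_and_lt_iff_mem (h : IsMChain m v u L) {b : Fin n} (hb : m ≤ (b : ℕ)) :
    u b ≤ v b ∧ (u b < v b ↔ b ∈ L.map Prod.snd) := by
  induction L generalizing v with
  | nil =>
    obtain ⟨-, rfl, -⟩ := h
    simp [chainProd]
  | cons p L ih =>
    obtain ⟨hp₁, -, hvp, htail⟩ := h.of_cons
    obtain ⟨hle, hlt_iff⟩ := ih htail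
    by_cases hbp : b = p.2
    · subst hbp
      have hlt : u p.2 < v p.2 := lt_of_le_of_lt hle (by simpa using hvp)
      simp [hlt.le, hlt]
    · have hfix : (v * swap p.1 p.2) b = v b :=
        congrArg v (swap_apply_of_ne_of_ne (by rintro rfl; omega) hbp)
      rw [hfix] at hle hlt_iff
      simp [hle, hlt_iff, hbp]

lemma filter_lt_eq_toFinset (h : IsMChain m v u L) :
    (univ.filter fun b : Fin n => m ≤ (b : ℕ) ∧ u b < v b) = (L.map Prod.snd).toFinset := by
  ext b
  simp only [mem_filter, mem_univ, true_and, List.mem_toFinset]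
  refine ⟨fun ⟨hb, hlt⟩ => (h.apply_le_and_lt_iff_mem hb).2.1 hlt, fun hb => ?_⟩
  obtain ⟨q, hq, rfl⟩ := List.mem_map.1 hb
  have hm := (h.1 q hq).2
  exact ⟨hm, (h.apply_le_and_lt_iff_mem hm).2.2 hb⟩

end IsMChain

theorem stmt2_general (n m : ℕ) (w u : Equiv.Perm (Fin n)) (h : mBruhat m w u) :
    (Finset.univ.filter fun b : Fin n => m ≤ (b : ℕ) ∧ u b < w b).card
      ≤ invLength u - invLength w ∧
    ((Finset.univ.filter fun b : Fin n => m ≤ (b : ℕ) ∧ u b < w b).card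
      = invLength u - invLength w ↔ rmRel m w u) := by
  obtain ⟨L, hL⟩ := h
  refine ⟨?_, fun heq => ⟨L, hL, ?_⟩, fun ⟨L', hL', hnodup⟩ => ?_⟩
  · rw [hL.filter_lt_eq_toFinset, hL.invLength_sub_eq]
    exact List.toFinset_card_le _
  · rw [hL.filter_lt_eq_toFinset, hL.invLength_sub_eq] at heq
    exact Multiset.coe_nodup.1 (Multiset.toFinset_card_eq_card_iff_nodup.1 heq)
  · rw [hL'.filter_lt_eq_toFinset, hL'.invLength_sub_eq]
    exact List.toFinset_card_of_nodup hnodup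

/-- if `w ≤ₘ u` then `#{b : m < b ≤ n, w(b) > u(b)} ≤ ℓ(u) − ℓ(w)`,
with equality if and only if `w →^{r_m} u`. -/
theorem stmt2 (n m : ℕ) (hn : 1 ≤ n) (hm : 1 ≤ m) (hmn : m < n)
    (w u : Equiv.Perm (Fin n)) (h : mBruhat m w u) :
    (Finset.univ.filter fun b : Fin n => m ≤ (b : ℕ) ∧ u b < w b).card
      ≤ invLength u - invLength w ∧
    ((Finset.univ.filter fun b : Fin n => m ≤ (b : ℕ) ∧ u b < w b).card
      = invLength u - invLength w ↔ rmRel m w u) :=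
  stmt2_general n m w u h
end
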